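/- The set 𝒞 = {x ∈ ℓ¹ \ c₀₀ : E(x) is homeomorphic to the Cantor set} is a dense Gδ subset of ℓ¹, hence residual. -/

import Mathlib

open Set Filter Topology

/-- The achievement set (set of all subsums) of a series `∑ x n`. -/
noncomputable def achSet (x : ℕ → ℝ) : Set ℝ :=
  {a : ℝ | ∃ A : Set ℕ, HasSum (fun n : A => x n) a}

/-- The tail sum `∑_{i > n} |x i|`. -/
noncomputable def tailSum (x : ℕ → ℝ) (n : ℕ) : ℝ := ∑' i : ℕ, |x (n + 1 + i)|

/-- `S` is a finite union of closed intervals. -/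
def IsFinUnionClosedIntervals (S : Set ℝ) : Prop :=
  ∃ s : Finset (ℝ × ℝ), S = ⋃ p ∈ s, Set.Icc p.1 p.2

/-- `S` is homeomorphic to the Cantor set (the Cantor space `ℕ → Bool`). -/
def CantorLike (S : Set ℝ) : Prop := Nonempty (S ≃ₜ (ℕ → Bool))

/-- Sequences which are not eventually zero. -/
def NotEventuallyZero (x : ℕ → ℝ) : Prop := ∀ N : ℕ, ∃ n ≥ N, x n ≠ 0

/-- The set `𝒞` inside `ℓ¹`: sequences which are not eventually zero and whose
achievement set is homeomorphic to the Cantor set. -/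
def mathcalC : Set (lp (fun _ : ℕ => ℝ) 1) :=
  {x | NotEventuallyZero (fun n => x n) ∧ CantorLike (achSet fun n => x n)}

/-!
The achievement set `E(x)` of an absolutely summable sequence is compact, and it is perfect as soon
as `x` has infinitely many nonzero terms, since toggling a tiny term moves a subsum by a tiny
nonzero amount. By Brouwer's characterization it is then a Cantor set exactly when it has empty
interior; the homeomorphism with `ℕ → Bool` comes from repeatedly cutting at a gap in the middle
third, which gives a disjoint Cantor scheme with vanishing diameters that covers the set.

`x ↦ E(x)` is 1-Lipschitz from `ℓ¹` to the Hausdorff distance, so `t ∈ E(x)` is a closed condition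
and "`E(x)` contains no interval with rational endpoints" is `G_δ`; so is "`x` has infinitely many
nonzero terms". For density, keep the first `N` terms of `x` and continue with `δ 4⁻ⁿ`: `E(y)` is
covered by `2ⁿ` intervals of length twice the `n`-th tail, of total length `O(2⁻ⁿ)`, so `E(y)` is
null and has empty interior.
-/

open Metric

section LinearOrder

variable {α : Type*} [LinearOrder α] {K : Set α} {m : α}

theorem inter_Iic_eq_inter_Iio_of_notMem (hm : m ∉ K) : K ∩ Iic m = K ∩ Iio m :=
  ext fun _ => and_congr_right fun hy => (ne_of_mem_of_not_mem hy hm).le_iff_lt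

theorem inter_Ici_eq_inter_Ioi_of_notMem (hm : m ∉ K) : K ∩ Ici m = K ∩ Ioi m :=
  ext fun _ => and_congr_right fun hy => (ne_of_mem_of_not_mem hy hm).symm.le_iff_lt

end LinearOrder

structure BrouwerCondition (K : Set ℝ) : Prop where
  nonempty : K.Nonempty
  isCompact : IsCompact K
  preperfect : Preperfect K
  interior_eq_empty : interior K = ∅

namespace BrouwerCondition

variable {K : Set ℝ}

theorem inter (hK : BrouwerCondition K) {C U : Set ℝ} (hC : IsClosed C) (hU : IsOpen U)
    (hCU : K ∩ C = K ∩ U) (hne : (K ∩ C).Nonempty) : BrouwerCondition (K ∩ C) where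
  nonempty := hne
  isCompact := hK.isCompact.inter_right hC
  preperfect := by rw [hCU, inter_comm]; exact hK.preperfect.open_inter hU
  interior_eq_empty := subset_empty_iff.1 <| hK.interior_eq_empty ▸ interior_mono inter_subset_left

theorem sInf_lt_sSup (hK : BrouwerCondition K) : sInf K < sSup K := by
  obtain ⟨a, ha⟩ := hK.nonempty
  obtain ⟨b, ⟨-, hb⟩, hba⟩ := preperfect_iff_nhds.1 hK.preperfect a ha univ univ_mem
  have hbdd := hK.isCompact.isBounded
  rcases hba.lt_or_gt with h | h
  · exact (csInf_le hbdd.bddBelow hb).trans_lt (h.trans_le (le_csSup hbdd.bddAbove ha))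
  · exact (csInf_le hbdd.bddBelow ha).trans_lt (h.trans_le (le_csSup hbdd.bddAbove hb))

theorem exists_notMem_middle_third (hK : BrouwerCondition K) :
    ∃ m ∈ Ioo (sInf K + (sSup K - sInf K) / 3) (sSup K - (sSup K - sInf K) / 3), m ∉ K := by
  by_contra! h
  have := isOpen_Ioo.subset_interior_iff.2 h
  rw [hK.interior_eq_empty, subset_empty_iff, Ioo_eq_empty_iff] at this
  exact this (by linarith [hK.sInf_lt_sSup])

theorem exists_split (hK : BrouwerCondition K) :
    ∃ m ∉ K, ∀ b : Bool, BrouwerCondition (K ∩ cond b (Ici m) (Iic m)) ∧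
      diam (K ∩ cond b (Ici m) (Iic m)) ≤ 2 / 3 * diam K := by
  obtain ⟨m, ⟨ham, hmb⟩, hmK⟩ := hK.exists_notMem_middle_third
  have hab := hK.sInf_lt_sSup
  have hbdd := hK.isCompact.isBounded
  have hdiam : diam K = sSup K - sInf K := Real.diam_eq hbdd
  have hKab : K ⊆ Icc (sInf K) (sSup K) := hbdd.subset_Icc_sInf_sSup
  refine ⟨m, hmK, Bool.forall_bool.2 ⟨?_, ?_⟩⟩ <;> simp only [cond_false, cond_true]
  · refine ⟨hK.inter isClosed_Iic isOpen_Iio (inter_Iic_eq_inter_Iio_of_notMem hmK)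
      ⟨sInf K, hK.isCompact.sInf_mem hK.nonempty, mem_Iic.2 (by linarith)⟩, ?_⟩
    calc diam (K ∩ Iic m) ≤ diam (Icc (sInf K) m) :=
          diam_mono (fun y hy => ⟨(hKab hy.1).1, hy.2⟩) (isBounded_Icc _ _)
      _ = m - sInf K := Real.diam_Icc (by linarith)
      _ ≤ 2 / 3 * diam K := by rw [hdiam]; linarith
  · refine ⟨hK.inter isClosed_Ici isOpen_Ioi (inter_Ici_eq_inter_Ioi_of_notMem hmK)
      ⟨sSup K, hK.isCompact.sSup_mem hK.nonempty, mem_Ici.2 (by linarith)⟩, ?_⟩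
    calc diam (K ∩ Ici m) ≤ diam (Icc m (sSup K)) :=
          diam_mono (fun y hy => ⟨hy.2, (hKab hy.1).2⟩) (isBounded_Icc _ _)
      _ = sSup K - m := Real.diam_Icc (by linarith)
      _ ≤ 2 / 3 * diam K := by rw [hdiam]; linarith

end BrouwerCondition

open scoped Classical in
noncomputable def middleGap (K : Set ℝ) : ℝ :=
  if h : BrouwerCondition K then h.exists_split.choose else 0

noncomputable def gapHalf (K : Set ℝ) (b : Bool) : Set ℝ :=
  K ∩ cond b (Ici (middleGap K)) (Iic (middleGap K))

noncomputable def gapTree (K : Set ℝ) : List Bool → Set ℝ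
  | [] => K
  | b :: l => gapHalf (gapTree K l) b

section GapTree

variable {K : Set ℝ}

theorem gapHalf_subset (b : Bool) : gapHalf K b ⊆ K := inter_subset_left

theorem gapHalf_false_union_gapHalf_true : gapHalf K false ∪ gapHalf K true = K := by
  rw [gapHalf, gapHalf, ← inter_union_distrib_left, cond_false, cond_true, Iic_union_Ici,
    inter_univ]

theorem disjoint_gapHalf (h : middleGap K ∉ K) : Disjoint (gapHalf K false) (gapHalf K true) :=
  Set.disjoint_left.2 fun _ ⟨hy, hy₁⟩ ⟨_, hy₂⟩ =>
    h (le_antisymm (mem_Iic.1 hy₁) (mem_Ici.1 hy₂) ▸ hy)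

theorem tendsto_two_thirds_pow_mul (c : ℝ) :
    Tendsto (fun n : ℕ => (2 / 3 : ℝ) ^ n * c) atTop (𝓝 0) := by
  simpa using (tendsto_pow_atTop_nhds_zero_of_lt_one (by norm_num : (0 : ℝ) ≤ 2 / 3)
    (by norm_num)).mul_const c

namespace BrouwerCondition

theorem middleGap_spec (hK : BrouwerCondition K) :
    middleGap K ∉ K ∧ ∀ b, BrouwerCondition (gapHalf K b) ∧
      diam (gapHalf K b) ≤ 2 / 3 * diam K := by
  simp only [gapHalf, middleGap, dif_pos hK]
  exact hK.exists_split.choose_spec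

theorem gapTree_spec (hK : BrouwerCondition K) (l : List Bool) :
    BrouwerCondition (gapTree K l) ∧ diam (gapTree K l) ≤ (2 / 3) ^ l.length * diam K := by
  induction l with
  | nil => simpa [gapTree] using hK
  | cons b l ih =>
    obtain ⟨hl, hdiam⟩ := ih
    obtain ⟨-, hhalf⟩ := hl.middleGap_spec
    refine ⟨(hhalf b).1, (hhalf b).2.trans ?_⟩
    rw [List.length_cons, pow_succ]
    linarith

theorem gapTree_disjoint (hK : BrouwerCondition K) : CantorScheme.Disjoint (gapTree K) := by
  rintro l (_ | _) (_ | _) hne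
  · exact absurd rfl hne
  · exact disjoint_gapHalf (hK.gapTree_spec l).1.middleGap_spec.1
  · exact (disjoint_gapHalf (hK.gapTree_spec l).1.middleGap_spec.1).symm
  · exact absurd rfl hne

theorem gapTree_vanishingDiam (hK : BrouwerCondition K) :
    CantorScheme.VanishingDiam (gapTree K) := by
  intro x
  refine tendsto_of_tendsto_of_tendsto_of_le_of_le tendsto_const_nhds
    (by simpa using ENNReal.tendsto_ofReal (tendsto_two_thirds_pow_mul (diam K)))
    (fun _ => zero_le) fun n => ?_
  obtain ⟨hn, hdiam⟩ := hK.gapTree_spec (PiNat.res x n)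
  rw [PiNat.res_length] at hdiam
  exact ediam_le_of_forall_dist_le fun p hp q hq =>
    (dist_le_diam_of_mem hn.isCompact.isBounded hp hq).trans hdiam

end BrouwerCondition

theorem gapTree_antitone : CantorScheme.Antitone (gapTree K) := fun _ b => gapHalf_subset b

theorem exists_mem_gapTree_res {p : ℝ} (hp : p ∈ K) (n : ℕ) :
    ∃ x : ℕ → Bool, p ∈ gapTree K (PiNat.res x n) := by
  induction n with
  | zero => exact ⟨fun _ => false, hp⟩
  | succ n ih =>
    obtain ⟨x, hx⟩ := ih
    rw [← gapHalf_false_union_gapHalf_true (K := gapTree K (PiNat.res x n))] at hx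
    obtain ⟨b, hb⟩ : ∃ b, p ∈ gapHalf (gapTree K (PiNat.res x n)) b := by
      rcases hx with h | h
      exacts [⟨false, h⟩, ⟨true, h⟩]
    refine ⟨Function.update x n b, ?_⟩
    have hres : PiNat.res (Function.update x n b) n = PiNat.res x n :=
      PiNat.res_eq_res.2 fun m hm => Function.update_of_ne hm.ne _ _
    rwa [PiNat.res_succ, Function.update_self, hres]

open CantorScheme PiNat in
theorem BrouwerCondition.cantorLike (hK : BrouwerCondition K) : CantorLike K := by
  have hdiam := hK.gapTree_vanishingDiam
  have hdom : (inducedMap (gapTree K)).1 = univ :=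
    (gapTree_antitone.closureAntitone fun l => (hK.gapTree_spec l).1.isCompact.isClosed
      ).map_of_vanishingDiam hdiam fun l => (hK.gapTree_spec l).1.nonempty
  let f : (ℕ → Bool) → ℝ := fun x => (inducedMap (gapTree K)).2 ⟨x, hdom ▸ mem_univ x⟩
  have hcont : Continuous f := hdiam.map_continuous.comp (by fun_prop)
  have hinj : Function.Injective f := fun x y h =>
    congrArg Subtype.val (hK.gapTree_disjoint.map_injective h)
  have hrange : range f = K := by
    refine (range_subset_iff.2 fun x => (map_mem _ 0 : f x ∈ gapTree K [])).antisymm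
      fun p hp => ?_
    rw [← (isCompact_range hcont).isClosed.closure_eq, Metric.mem_closure_iff]
    intro ε hε
    obtain ⟨n, hn⟩ := ((tendsto_two_thirds_pow_mul (diam K)).eventually (gt_mem_nhds hε)).exists
    obtain ⟨x, hx⟩ := exists_mem_gapTree_res hp n
    obtain ⟨hxn, hdiam⟩ := hK.gapTree_spec (res x n)
    rw [res_length] at hdiam
    refine ⟨f x, mem_range_self x, ?_⟩
    calc dist p (f x) ≤ diam (gapTree K (res x n)) :=
          dist_le_diam_of_mem hxn.isCompact.isBounded hx (map_mem _ n)
      _ < ε := hdiam.trans_lt hn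
  exact ⟨((hcont.isClosedEmbedding hinj).isEmbedding.toHomeomorph.trans
    (Homeomorph.setCongr hrange)).symm⟩

end GapTree

open MeasureTheory

section AchievementSet

variable {x y : ℕ → ℝ}

theorem mem_achSet_iff (hx : Summable x) {a : ℝ} :
    a ∈ achSet x ↔ ∃ A : Set ℕ, ∑' n, A.indicator x n = a :=
  ⟨fun ⟨A, hA⟩ => ⟨A, (hasSum_subtype_iff_indicator.1 hA).tsum_eq⟩,
    fun ⟨A, hA⟩ => ⟨A, hA ▸ hasSum_subtype_iff_indicator.2 (hx.indicator A).hasSum⟩⟩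

theorem zero_mem_achSet : (0 : ℝ) ∈ achSet x := ⟨∅, hasSum_empty⟩

theorem achSet_eq_range (hx : Summable x) :
    achSet x = range fun b : ℕ → Bool => ∑' n, if b n then x n else 0 := by
  ext a
  rw [mem_achSet_iff hx]
  constructor
  · rintro ⟨A, rfl⟩
    classical
    exact ⟨fun n => decide (n ∈ A), by simp [Set.indicator_apply]⟩
  · rintro ⟨b, rfl⟩
    exact ⟨{n | b n}, by simp [Set.indicator_apply]⟩

theorem isCompact_achSet (hx : Summable x) : IsCompact (achSet x) := by
  rw [achSet_eq_range hx]
  refine isCompact_range (continuous_tsum (fun n => ?_) hx.abs fun n b => ?_)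
  · exact (continuous_of_discreteTopology (f := fun c : Bool => if c then x n else 0)).comp
      (continuous_apply n)
  · split_ifs <;> simp

theorem exists_mem_achSet_abs_sub_eq (hx : Summable x) {a : ℝ} (ha : a ∈ achSet x) (n : ℕ) :
    ∃ a' ∈ achSet x, |a' - a| = |x n| := by
  obtain ⟨A, rfl⟩ := (mem_achSet_iff hx).1 ha
  set B := symmDiff A {n}
  refine ⟨_, (mem_achSet_iff hx).2 ⟨B, rfl⟩, ?_⟩
  rw [← (hx.indicator B).tsum_sub (hx.indicator A), tsum_eq_single n fun m hm => ?_]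
  · by_cases hn : n ∈ A <;> simp [B, Set.mem_symmDiff, hn]
  · have hB : m ∈ B ↔ m ∈ A := by simp [B, Set.mem_symmDiff, hm]
    classical
    simp only [Set.indicator_apply, hB, sub_self]

theorem preperfect_achSet (hx : Summable x) (hx₀ : NotEventuallyZero x) :
    Preperfect (achSet x) := by
  rw [preperfect_iff_nhds]
  intro a ha U hU
  obtain ⟨ε, hε, hball⟩ := Metric.mem_nhds_iff.1 hU
  obtain ⟨N, hN⟩ := Metric.tendsto_atTop.1 hx.tendsto_atTop_zero ε hε
  obtain ⟨n, hnN, hn⟩ := hx₀ N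
  obtain ⟨a', ha', hdist⟩ := exists_mem_achSet_abs_sub_eq hx ha n
  refine ⟨a', ⟨hball ?_, ha'⟩, fun h => hn (abs_eq_zero.1 (by simp [← hdist, h]))⟩
  simpa [Real.dist_eq, hdist] using hN n hnN

theorem brouwerCondition_achSet (hx : Summable x) (hx₀ : NotEventuallyZero x)
    (hint : interior (achSet x) = ∅) : BrouwerCondition (achSet x) :=
  ⟨⟨0, zero_mem_achSet⟩, isCompact_achSet hx, preperfect_achSet hx hx₀, hint⟩

theorem CantorLike.interior_eq_empty {S : Set ℝ} (h : CantorLike S) : interior S = ∅ := by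
  obtain ⟨e⟩ := h
  have htd : IsTotallyDisconnected S :=
    totallyDisconnectedSpace_subtype_iff.1 e.symm.totallyDisconnectedSpace
  refine eq_empty_of_forall_notMem fun t ht => ?_
  obtain ⟨ε, hε, hIoo⟩ := Metric.mem_nhds_iff.1 (mem_interior_iff_mem_nhds.1 ht)
  rw [Real.ball_eq_Ioo] at hIoo
  obtain ⟨z, hz, hzI⟩ := isTotallyDisconnected_iff_lt.1 htd (t - ε / 2)
    (hIoo ⟨by linarith, by linarith⟩) (t + ε / 2) (hIoo ⟨by linarith, by linarith⟩) (by linarith)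
  exact hz (hIoo ⟨by linarith [hzI.1], by linarith [hzI.2]⟩)

theorem cantorLike_achSet_iff (hx : Summable x) (hx₀ : NotEventuallyZero x) :
    CantorLike (achSet x) ↔ interior (achSet x) = ∅ :=
  ⟨CantorLike.interior_eq_empty, fun hint => (brouwerCondition_achSet hx hx₀ hint).cantorLike⟩

theorem achSet_subset_biUnion_closedBall (hx : Summable x) (n : ℕ) :
    achSet x ⊆ ⋃ s ∈ (Finset.range n).powerset, closedBall (∑ i ∈ s, x i) (∑' i, |x (i + n)|) := by
  classical
  intro a ha
  obtain ⟨A, rfl⟩ := (mem_achSet_iff hx).1 ha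
  have hA := hx.indicator A
  refine mem_iUnion₂.2 ⟨(Finset.range n).filter (· ∈ A),
    Finset.mem_powerset.2 (Finset.filter_subset _ _), ?_⟩
  have hhead : ∑ i ∈ (Finset.range n).filter (· ∈ A), x i =
      ∑ i ∈ Finset.range n, A.indicator x i := by
    rw [Finset.sum_filter]
    rfl
  rw [mem_closedBall, Real.dist_eq, ← hA.sum_add_tsum_nat_add n, hhead, add_sub_cancel_left,
    ← Real.norm_eq_abs]
  refine tsum_of_norm_bounded ((summable_nat_add_iff n).2 hx.abs).hasSum fun i => ?_
  simpa using norm_indicator_le_norm_self x (i + n)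

theorem volume_achSet_le (hx : Summable x) (n : ℕ) :
    volume (achSet x) ≤ ENNReal.ofReal (2 * (2 ^ n * ∑' i, |x (i + n)|)) := by
  calc volume (achSet x)
      ≤ ∑ s ∈ (Finset.range n).powerset, volume (closedBall (∑ i ∈ s, x i) (∑' i, |x (i + n)|)) :=
        (measure_mono (achSet_subset_biUnion_closedBall hx n)).trans
          (measure_biUnion_finset_le _ _)
    _ = ENNReal.ofReal (2 * (2 ^ n * ∑' i, |x (i + n)|)) := by
        rw [Finset.sum_congr rfl fun s _ => Real.volume_closedBall _ _, Finset.sum_const,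
          Finset.card_powerset, Finset.card_range, nsmul_eq_mul, ← ENNReal.ofReal_natCast,
          ← ENNReal.ofReal_mul (by positivity)]
        congr 1
        push_cast
        ring

theorem volume_achSet_eq_zero (hx : Summable x)
    (h : Tendsto (fun n => 2 ^ n * ∑' i, |x (i + n)|) atTop (𝓝 0)) : volume (achSet x) = 0 := by
  have hlim := ENNReal.tendsto_ofReal (h.const_mul 2)
  rw [mul_zero, ENNReal.ofReal_zero] at hlim
  exact le_antisymm (ge_of_tendsto' hlim (volume_achSet_le hx)) zero_le

theorem exists_mem_achSet_dist_le (hx : Summable x) (hy : Summable y) {a : ℝ}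
    (ha : a ∈ achSet y) : ∃ a' ∈ achSet x, dist a a' ≤ ∑' n, |y n - x n| := by
  obtain ⟨A, rfl⟩ := (mem_achSet_iff hy).1 ha
  refine ⟨_, (mem_achSet_iff hx).2 ⟨A, rfl⟩, ?_⟩
  rw [dist_eq_norm, ← (hy.indicator A).tsum_sub (hx.indicator A)]
  refine tsum_of_norm_bounded (hy.sub hx).abs.hasSum fun n => ?_
  rw [← Pi.sub_apply (A.indicator y), ← Set.indicator_sub']
  simpa using norm_indicator_le_norm_self (y - x) n

end AchievementSet

theorem interior_eq_empty_iff_forall_Ioo_rat {S : Set ℝ} :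
    interior S = ∅ ↔ ∀ p q : ℚ, p < q → ¬ Ioo (p : ℝ) q ⊆ S := by
  refine ⟨fun h p q hpq hsub => ?_, fun h => eq_empty_of_forall_notMem fun t ht => ?_⟩
  · obtain ⟨z, hz⟩ := nonempty_Ioo.2 (Rat.cast_lt.2 hpq : (p : ℝ) < q)
    have := isOpen_Ioo.subset_interior_iff.2 hsub hz
    rwa [h] at this
  · obtain ⟨U, hU, -, hUS⟩ :=
      Real.isTopologicalBasis_Ioo_rat.mem_nhds_iff.1 (mem_interior_iff_mem_nhds.1 ht)
    simp only [mem_iUnion, mem_singleton_iff] at hU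
    obtain ⟨p, q, hpq, rfl⟩ := hU
    exact h p q hpq hUS

section GeometricGraft

variable {x : ℕ → ℝ} {N : ℕ} {δ : ℝ}

noncomputable def graftGeometric (x : ℕ → ℝ) (N : ℕ) (δ : ℝ) (n : ℕ) : ℝ :=
  if n < N then x n else δ * 4⁻¹ ^ n

theorem graftGeometric_of_le {n : ℕ} (h : N ≤ n) : graftGeometric x N δ n = δ * 4⁻¹ ^ n :=
  if_neg h.not_gt

theorem abs_graftGeometric_add {n : ℕ} (h : N ≤ n) (i : ℕ) :
    |graftGeometric x N δ (i + n)| = |δ| * 4⁻¹ ^ n * 4⁻¹ ^ i := by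
  rw [graftGeometric_of_le (h.trans (Nat.le_add_left n i)), abs_mul,
    abs_of_pos (by positivity : (0 : ℝ) < 4⁻¹ ^ (i + n)), pow_add]
  ring

theorem tsum_abs_graftGeometric_nat_add {n : ℕ} (h : N ≤ n) :
    ∑' i, |graftGeometric x N δ (i + n)| = 4 / 3 * |δ| * 4⁻¹ ^ n := by
  rw [tsum_congr (abs_graftGeometric_add h), tsum_mul_left,
    tsum_geometric_of_lt_one (by norm_num) (by norm_num)]
  ring

theorem summable_abs_graftGeometric : Summable fun n => |graftGeometric x N δ n| := by
  refine (summable_nat_add_iff N).1 ?_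
  simp_rw [abs_graftGeometric_add le_rfl]
  exact (summable_geometric_of_lt_one (by norm_num) (by norm_num)).mul_left _

theorem notEventuallyZero_graftGeometric (hδ : δ ≠ 0) : NotEventuallyZero (graftGeometric x N δ) :=
  fun M => ⟨max M N, le_max_left M N, by
    rw [graftGeometric_of_le (le_max_right M N)]
    positivity⟩

theorem volume_achSet_graftGeometric : volume (achSet (graftGeometric x N δ)) = 0 := by
  refine volume_achSet_eq_zero summable_abs_graftGeometric.of_abs ?_
  have hgeom : Tendsto (fun n : ℕ => 4 / 3 * |δ| * 2⁻¹ ^ n) atTop (𝓝 0) := by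
    simpa using (tendsto_pow_atTop_nhds_zero_of_lt_one (by norm_num : (0 : ℝ) ≤ 2⁻¹)
      (by norm_num)).const_mul (4 / 3 * |δ|)
  refine hgeom.congr' (eventually_atTop.2 ⟨N, fun n hn => ?_⟩)
  have hpow : (2 : ℝ) ^ n * 4⁻¹ ^ n = 2⁻¹ ^ n := by rw [← mul_pow]; norm_num
  dsimp only
  rw [tsum_abs_graftGeometric_nat_add hn]
  linear_combination (-(4 / 3 * |δ|)) * hpow

theorem tsum_abs_graftGeometric_sub_le (hx : Summable x) (hδ : 0 ≤ δ) :
    ∑' n, |graftGeometric x N δ n - x n| ≤ 4 / 3 * δ + ∑' i, |x (i + N)| := by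
  have hs : Summable fun n => |graftGeometric x N δ n - x n| :=
    (summable_abs_graftGeometric.of_abs.sub hx).abs
  have hhead : ∑ i ∈ Finset.range N, |graftGeometric x N δ i - x i| = 0 :=
    Finset.sum_eq_zero fun i hi => by
      rw [graftGeometric, if_pos (Finset.mem_range.1 hi), sub_self, abs_zero]
  have hgeom : Summable fun i : ℕ => δ * 4⁻¹ ^ i :=
    (summable_geometric_of_lt_one (by norm_num) (by norm_num)).mul_left δ
  have hxN : Summable fun i => |x (i + N)| := (summable_nat_add_iff N).2 hx.abs
  rw [← hs.sum_add_tsum_nat_add N, hhead, zero_add]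
  calc ∑' i, |graftGeometric x N δ (i + N) - x (i + N)|
      ≤ ∑' i, (δ * 4⁻¹ ^ i + |x (i + N)|) := by
        refine ((summable_nat_add_iff N).2 hs).tsum_le_tsum (fun i => ?_) (hgeom.add hxN)
        rw [graftGeometric_of_le (Nat.le_add_left N i)]
        refine (abs_sub _ _).trans ?_
        gcongr
        rw [abs_of_nonneg (by positivity), pow_add]
        exact mul_le_mul_of_nonneg_left (mul_le_of_le_one_right (by positivity)
          (pow_le_one₀ (by norm_num) (by norm_num))) hδ
    _ = 4 / 3 * δ + ∑' i, |x (i + N)| := by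
        rw [hgeom.tsum_add hxN, tsum_mul_left, tsum_geometric_of_lt_one (by norm_num) (by norm_num)]
        norm_num [mul_comm]

end GeometricGraft

open scoped lp

namespace lp

variable {α : Type*}

theorem summable_abs_coe (x : ℓ¹(α, ℝ)) : Summable fun n => |x n| := by
  simpa using (lp.memℓp x).summable (by norm_num)

theorem dist_eq_tsum_abs (x y : ℓ¹(α, ℝ)) : dist x y = ∑' n, |x n - y n| := by
  rw [dist_eq_norm, lp.norm_eq_tsum_rpow (by norm_num)]
  simp

theorem exists_coe_eq {f : α → ℝ} (hf : Summable fun n => |f n|) : ∃ y : ℓ¹(α, ℝ), ⇑y = f :=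
  ⟨⟨f, memℓp_gen (by simpa using hf)⟩, rfl⟩

end lp

theorem isClosed_setOf_mem_achSet (t : ℝ) : IsClosed {x : ℓ¹(ℕ, ℝ) | t ∈ achSet x} := by
  refine isClosed_of_closure_subset fun x hx => ?_
  rw [mem_ofPred_eq, ← (isCompact_achSet (lp.summable_abs_coe x).of_abs).isClosed.closure_eq,
    Metric.mem_closure_iff]
  intro ε hε
  obtain ⟨y, hy, hxy⟩ := Metric.mem_closure_iff.1 hx ε hε
  obtain ⟨a, ha, hdist⟩ := exists_mem_achSet_dist_le (lp.summable_abs_coe x).of_abs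
    (lp.summable_abs_coe y).of_abs hy
  exact ⟨a, ha, hdist.trans_lt (by rwa [← lp.dist_eq_tsum_abs, dist_comm])⟩

theorem isGδ_setOf_interior_achSet_eq_empty :
    IsGδ {x : ℓ¹(ℕ, ℝ) | interior (achSet x) = ∅} := by
  simp only [interior_eq_empty_iff_forall_Ioo_rat, ofPred_forall]
  refine .iInter fun p => .iInter fun q => .iInter fun _ => IsOpen.isGδ ?_
  have hclosed : IsClosed {x : ℓ¹(ℕ, ℝ) | Ioo (p : ℝ) q ⊆ achSet x} := by
    simpa only [subset_def, ofPred_forall] using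
      isClosed_biInter fun t _ => isClosed_setOf_mem_achSet t
  exact hclosed.isOpen_compl

theorem isGδ_setOf_notEventuallyZero : IsGδ {x : ℓ¹(ℕ, ℝ) | NotEventuallyZero x} := by
  simp only [NotEventuallyZero, ofPred_forall, ofPred_exists, ofPred_and]
  refine .iInter fun N => IsOpen.isGδ (isOpen_iUnion fun n => isOpen_const.inter ?_)
  exact isOpen_ne_fun (lp.lipschitzWith_one_eval 1 n).continuous continuous_const

theorem mathcalC_eq :
    mathcalC = {x : ℓ¹(ℕ, ℝ) | NotEventuallyZero x} ∩ {x | interior (achSet x) = ∅} :=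
  ext fun x => and_congr_right fun hx₀ => cantorLike_achSet_iff (lp.summable_abs_coe x).of_abs hx₀

theorem isGδ_mathcalC : IsGδ mathcalC :=
  mathcalC_eq ▸ isGδ_setOf_notEventuallyZero.inter isGδ_setOf_interior_achSet_eq_empty

theorem dense_mathcalC : Dense mathcalC := by
  refine Metric.dense_iff.2 fun x ε hε => ?_
  have hx := (lp.summable_abs_coe x).of_abs
  obtain ⟨N, hN⟩ := ((tendsto_sum_nat_add fun n => |x n|).eventually
    (gt_mem_nhds (half_pos hε))).exists
  obtain ⟨y, hy⟩ := lp.exists_coe_eq (summable_abs_graftGeometric (x := x) (N := N) (δ := ε / 4))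
  refine ⟨y, ?_, ?_⟩
  · rw [Metric.mem_ball, lp.dist_eq_tsum_abs, hy]
    linarith [tsum_abs_graftGeometric_sub_le (N := N) hx (by positivity : 0 ≤ ε / 4)]
  · rw [mathcalC_eq]
    refine ⟨?_, ?_⟩ <;> simp only [mem_ofPred_eq, hy]
    exacts [notEventuallyZero_graftGeometric (by positivity),
      volume.interior_eq_empty_of_null volume_achSet_graftGeometric]

theorem mathcalC_dense_Gδ_residual :
    Dense mathcalC ∧ IsGδ mathcalC ∧ mathcalC ∈ residual (lp (fun _ : ℕ => ℝ) 1) :=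
  ⟨dense_mathcalC, isGδ_mathcalC, residual_of_dense_Gδ isGδ_mathcalC dense_mathcalC⟩
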